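/- arXiv:math/0303371 — 2 statements merged into one kernel-verified Lean document; each statement's English description precedes it below -/
import Mathlib

section
/- For a pseudo-Riemannian metric G on M with musical isomorphism ♭_G : TM → T*M, and a vector field g on M that is locally gradient (i.e., ♭_G(g) is closed), the pushforward under ♭_G of the complete lift g^c to TM equals the G^c-gradient of the momentum function V^g on T*M composed with ♭_G, where G^c is the Riemannian extension of the Levi-Civita connection of G: (♭_G)_* g^c = grad_{G^c} V^g ∘ ♭_G. -/
open scoped BigOperators
noncomputable section

/-- Points of the coordinate model of an `n`-manifold. -/
abbrev Pt (n : ℕ) : Type := Fin n → ℝ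
/-- Vector fields in coordinates. -/
abbrev VF (n : ℕ) : Type := Pt n → Pt n
/-- Christoffel symbols `Γ x a b c = Γ^a_{bc}(x)` of an affine connection. -/
abbrev Chr (n : ℕ) : Type := Pt n → Fin n → Fin n → Fin n → ℝ

/-- Partial derivative `∂f/∂x^b` at `x`. -/
def pd {n : ℕ} (f : Pt n → ℝ) (b : Fin n) (x : Pt n) : ℝ :=
  fderiv ℝ f x (Pi.single b 1)

/-- Lie derivative of a function along a vector field, `X f`. -/
def dirDer {n : ℕ} (X : VF n) (f : Pt n → ℝ) : Pt n → ℝ :=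
  fun x => ∑ b, X x b * pd f b x

/-- Covariant derivative `∇_X Y` of the connection with Christoffel symbols `Γ`. -/
def nabla {n : ℕ} (Γ : Chr n) (X Y : VF n) : VF n :=
  fun x a => (∑ b, X x b * pd (fun y => Y y a) b x) + ∑ b, ∑ c, Γ x a b c * X x b * Y x c

/-- Symmetric product `⟨X : Y⟩ = ∇_X Y + ∇_Y X`. -/
def symProd {n : ℕ} (Γ : Chr n) (X Y : VF n) : VF n :=
  fun x a => nabla Γ X Y x a + nabla Γ Y X x a

/-- Lie bracket `[X, Y]` in coordinates. -/
def lieBr {n : ℕ} (X Y : VF n) : VF n :=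
  fun x a => (∑ b, X x b * pd (fun y => Y y a) b x) - ∑ b, Y x b * pd (fun y => X y a) b x

/-- Smoothness of a vector field (componentwise). -/
def SmoothVF {n : ℕ} (X : VF n) : Prop := ∀ a, ContDiff ℝ (⊤ : ℕ∞) (fun x => X x a)

/-- Torsion-free connection: Christoffel symbols symmetric in the lower indices. -/
def TorsionFree {n : ℕ} (Γ : Chr n) : Prop := ∀ x a b c, Γ x a b c = Γ x a c b

/-- Smoothness of the Christoffel symbols. -/
def SmoothChr {n : ℕ} (Γ : Chr n) : Prop := ∀ a b c, ContDiff ℝ (⊤ : ℕ∞) (fun x => Γ x a b c)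

/-- Gradient vector field of `f` w.r.t. a (pseudo-Riemannian) metric with inverse matrix `Ginv`. -/
def gradV {n : ℕ} (Ginv : Pt n → Matrix (Fin n) (Fin n) ℝ) (f : Pt n → ℝ) : VF n :=
  fun x a => ∑ b, Ginv x a b * pd f b x

/-- Beltrami bracket `⟨⟨f,g⟩⟩_G = G(grad f, grad g)`. -/
def beltrami {n : ℕ} (Ginv : Pt n → Matrix (Fin n) (Fin n) ℝ) (f g : Pt n → ℝ) : Pt n → ℝ :=
  fun x => ∑ a, ∑ b, pd f a x * Ginv x a b * pd g b x

/-- Christoffel symbols of the Levi-Civita connection of `G`. -/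
def leviCivita {n : ℕ} (G Ginv : Pt n → Matrix (Fin n) (Fin n) ℝ) : Chr n :=
  fun x a b c => (1/2) * ∑ d, Ginv x a d *
    (pd (fun y => G y d b) c x + pd (fun y => G y d c) b x - pd (fun y => G y b c) d x)

/-- Smoothness of a matrix-valued function (entrywise). -/
def SmoothMat {n : ℕ} (G : Pt n → Matrix (Fin n) (Fin n) ℝ) : Prop :=
  ∀ a b, ContDiff ℝ (⊤ : ℕ∞) (fun x => G x a b)

/-- `G` and `Ginv` are mutually inverse symmetric matrices at every point. -/
def MetricPair {n : ℕ} (G Ginv : Pt n → Matrix (Fin n) (Fin n) ℝ) : Prop :=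
  (∀ x, (G x).IsSymm) ∧ (∀ x, G x * Ginv x = 1) ∧ (∀ x, Ginv x * G x = 1)

/-- The evaluation `G(X,Y)` of the metric on two vector fields. -/
def gPair {n : ℕ} (G : Pt n → Matrix (Fin n) (Fin n) ℝ) (X Y : VF n) : Pt n → ℝ :=
  fun x => ∑ a, ∑ b, G x a b * X x a * Y x b

/-- Points of the (co)tangent bundle in coordinates: `(x, v)` resp. `(x, p)`. -/
abbrev TPt (n : ℕ) : Type := Pt n × Pt n

/-- Complete lift of a function to `TM`: `f^c(x,v) = ⟨df(x), v⟩`. -/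
def fc {n : ℕ} (f : Pt n → ℝ) : TPt n → ℝ := fun q => ∑ a, pd f a q.1 * q.2 a

/-- Vertical lift of a function to `TM` (or `T*M`): `f^v = f ∘ pr₁`. -/
def fvT {n : ℕ} (f : Pt n → ℝ) : TPt n → ℝ := fun q => f q.1

/-- Complete lift of a vector field to `TM` in coordinates. -/
def completeLift {n : ℕ} (X : VF n) : TPt n → TPt n :=
  fun q => (X q.1, fun a => ∑ b, pd (fun y => X y a) b q.1 * q.2 b)

/-- Vertical lift of a vector field to `TM`. -/
def verticalLift {n : ℕ} (X : VF n) : TPt n → TPt n := fun q => (0, X q.1)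

/-- Action of a vector field on the double space on a function. -/
def vfApply {n : ℕ} (Z : TPt n → TPt n) (F : TPt n → ℝ) : TPt n → ℝ :=
  fun q => fderiv ℝ F q (Z q)

/-- Momentum function `V^X(x,p) = ⟨p, X(x)⟩` on `T*M`. -/
def momF {n : ℕ} (X : VF n) : TPt n → ℝ := fun q => ∑ a, q.2 a * X q.1 a

/-- Partial derivative of a function on `T*M` in the `x^a` direction. -/
def pdX {n : ℕ} (F : TPt n → ℝ) (a : Fin n) (q : TPt n) : ℝ :=
  fderiv ℝ F q (Pi.single a 1, 0)

/-- Partial derivative of a function on `T*M` in the `p_a` direction. -/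
def pdP {n : ℕ} (F : TPt n → ℝ) (a : Fin n) (q : TPt n) : ℝ :=
  fderiv ℝ F q (0, Pi.single a 1)

/-- Gradient w.r.t. the Riemannian extension `G^c` of a torsion-free connection `Γ`,
computed with the inverse metric matrix `[[0, I], [I, 2 p_a Γ^a_{bc}]]`. -/
def gradGc {n : ℕ} (Γ : Chr n) (F : TPt n → ℝ) : TPt n → TPt n :=
  fun q => (fun a => pdP F a q,
    fun b => pdX F b q + 2 * ∑ a, ∑ c, q.2 a * Γ q.1 a b c * pdP F c q)

/-- The musical isomorphism `♭_G : TM → T*M`, `(x,v) ↦ (x, G(x)v)`. -/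
def flatG {n : ℕ} (G : Pt n → Matrix (Fin n) (Fin n) ℝ) : TPt n → TPt n :=
  fun q => (q.1, fun a => ∑ b, G q.1 a b * q.2 b)

/-- The Riemannian extension metric `G^c` on `T*M`, with matrix
`[[−2 p_c Γ^c_{ab}, I], [I, 0]]`, evaluated on two tangent vectors `u, w` at `q`. -/
def gcPair {n : ℕ} (Γ : Chr n) (q : TPt n) (u w : TPt n) : ℝ :=
  (∑ a, ∑ b, (-(2 * ∑ c, q.2 c * Γ q.1 c a b)) * u.1 a * w.1 b)
    + (∑ a, u.1 a * w.2 a) + ∑ a, u.2 a * w.1 a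


section AuxFlatPush

variable {n : ℕ}

private lemma fderiv_apply_sum_pd (f : Pt n → ℝ) (x u : Pt n) :
    fderiv ℝ f x u = ∑ c, u c * pd f c x := by
  have hu : u = ∑ c, u c • (Pi.single c 1 : Pt n) := by
    ext j; simp [Pi.single_apply]
  conv_lhs => rw [hu]
  rw [map_sum]
  refine Finset.sum_congr rfl fun c _ => ?_
  rw [map_smul, smul_eq_mul, pd]

private lemma sum_comm3 (f : Fin n → Fin n → Fin n → ℝ) :
    (∑ d, ∑ c, ∑ e, f d c e) = ∑ e, ∑ c, ∑ d, f d c e := by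
  calc (∑ d, ∑ c, ∑ e, f d c e) = ∑ c, ∑ d, ∑ e, f d c e := Finset.sum_comm
    _ = ∑ c, ∑ e, ∑ d, f d c e := Finset.sum_congr rfl fun c _ => Finset.sum_comm
    _ = ∑ e, ∑ c, ∑ d, f d c e := Finset.sum_comm

private lemma hasFDerivAt_momF (g : VF n) (hg : SmoothVF g) (q : TPt n) :
    HasFDerivAt (momF g)
      (∑ a, (q.2 a • ((fderiv ℝ (fun x => g x a) q.1).comp (ContinuousLinearMap.fst ℝ (Pt n) (Pt n)))
        + g q.1 a • ((ContinuousLinearMap.proj a).comp (ContinuousLinearMap.snd ℝ (Pt n) (Pt n))))) q := by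
  unfold momF
  refine HasFDerivAt.fun_sum fun a _ => ?_
  have h1 : HasFDerivAt (fun q : TPt n => q.2 a)
      ((ContinuousLinearMap.proj a).comp (ContinuousLinearMap.snd ℝ (Pt n) (Pt n))) q :=
    ((ContinuousLinearMap.proj a).comp (ContinuousLinearMap.snd ℝ (Pt n) (Pt n))).hasFDerivAt
  have h2 : HasFDerivAt (fun q : TPt n => g q.1 a)
      ((fderiv ℝ (fun x => g x a) q.1).comp (ContinuousLinearMap.fst ℝ (Pt n) (Pt n))) q :=
    (((hg a).differentiable (by simp) q.1).hasFDerivAt).comp q hasFDerivAt_fst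
  exact h1.mul h2

private lemma pdP_momF (g : VF n) (hg : SmoothVF g) (a : Fin n) (q : TPt n) :
    pdP (momF g) a q = g q.1 a := by
  rw [pdP, (hasFDerivAt_momF g hg q).fderiv]
  simp [Pi.single_apply]

private lemma pdX_momF (g : VF n) (hg : SmoothVF g) (b : Fin n) (q : TPt n) :
    pdX (momF g) b q = ∑ a, q.2 a * pd (fun x => g x a) b q.1 := by
  rw [pdX, (hasFDerivAt_momF g hg q).fderiv]
  simp [pd]

private lemma hasFDerivAt_flatG (G : Pt n → Matrix (Fin n) (Fin n) ℝ) (hG : SmoothMat G) (q : TPt n) :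
    HasFDerivAt (flatG G)
      ((ContinuousLinearMap.fst ℝ (Pt n) (Pt n)).prod
        (ContinuousLinearMap.pi fun a => ∑ b,
          (G q.1 a b • ((ContinuousLinearMap.proj b).comp (ContinuousLinearMap.snd ℝ (Pt n) (Pt n)))
            + q.2 b • ((fderiv ℝ (fun x => G x a b) q.1).comp (ContinuousLinearMap.fst ℝ (Pt n) (Pt n)))))) q := by
  unfold flatG
  refine HasFDerivAt.prodMk hasFDerivAt_fst ?_
  refine hasFDerivAt_pi.2 fun a => ?_
  refine HasFDerivAt.fun_sum fun b _ => ?_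
  have h1 : HasFDerivAt (fun q : TPt n => G q.1 a b)
      ((fderiv ℝ (fun x => G x a b) q.1).comp (ContinuousLinearMap.fst ℝ (Pt n) (Pt n))) q :=
    (((hG a b).differentiable (by simp) q.1).hasFDerivAt).comp q hasFDerivAt_fst
  have h2 : HasFDerivAt (fun q : TPt n => q.2 b)
      ((ContinuousLinearMap.proj b).comp (ContinuousLinearMap.snd ℝ (Pt n) (Pt n))) q :=
    ((ContinuousLinearMap.proj b).comp (ContinuousLinearMap.snd ℝ (Pt n) (Pt n))).hasFDerivAt
  exact h1.mul h2

private lemma pd_flat (G : Pt n → Matrix (Fin n) (Fin n) ℝ) (hG : SmoothMat G)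
    (g : VF n) (hg : SmoothVF g) (a b : Fin n) (x : Pt n) :
    pd (fun y => ∑ c, G y a c * g y c) b x
      = ∑ c, (g x c * pd (fun y => G y a c) b x + G x a c * pd (fun y => g y c) b x) := by
  have h : HasFDerivAt (fun y => ∑ c, G y a c * g y c)
      (∑ c, (G x a c • fderiv ℝ (fun y => g y c) x + g x c • fderiv ℝ (fun y => G y a c) x)) x := by
    refine HasFDerivAt.fun_sum fun c _ => ?_
    exact (((hG a c).differentiable (by simp) x).hasFDerivAt).mul
      (((hg c).differentiable (by simp) x).hasFDerivAt)
  rw [pd, h.fderiv]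
  simp only [ContinuousLinearMap.sum_apply, ContinuousLinearMap.add_apply,
    ContinuousLinearMap.smul_apply, smul_eq_mul]
  exact Finset.sum_congr rfl fun c _ => by simp only [pd]; ring

end AuxFlatPush

/-- For a locally gradient vector field `g` (i.e. `♭_G(g)` closed), the pushforward under
`♭_G` of the complete lift `g^c` equals `grad_{G^c} V^g ∘ ♭_G`, where `G^c` is the
Riemannian extension of the Levi-Civita connection of `G`. -/
theorem flat_pushforward_completeLift {n : ℕ}
    (G Ginv : Pt n → Matrix (Fin n) (Fin n) ℝ)
    (hG : SmoothMat G) (hGinv : SmoothMat Ginv) (hpair : MetricPair G Ginv)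
    (g : VF n) (hg : SmoothVF g)
    (hclosed : ∀ x a b, pd (fun y => ∑ c, G y a c * g y c) b x
      = pd (fun y => ∑ c, G y b c * g y c) a x) :
    ∀ q : TPt n, fderiv ℝ (flatG G) q (completeLift g q)
      = gradGc (leviCivita G Ginv) (momF g) (flatG G q) := by
  intro q
  obtain ⟨hsymm, hGinv1, _hGinv2⟩ := hpair
  have hsym : ∀ (y : Pt n) i j, G y i j = G y j i := fun y i j => by
    rw [← (hsymm y).apply i j]
  rw [(hasFDerivAt_flatG G hG q).fderiv]
  have hfst : (flatG G q).1 = q.1 := rfl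
  have hsnd : (flatG G q).2 = fun e => ∑ b, G q.1 e b * q.2 b := rfl
  refine Prod.ext ?_ ?_
  · funext a
    simp [gradGc, pdP_momF g hg, completeLift, hfst]
  · funext a
    -- abbreviations
    set x := q.1 with hxdef
    set v := q.2 with hvdef
    set p : Pt n := fun e => ∑ b, G x e b * v b with hpdef
    -- evaluate the left-hand side
    have hleft : (((ContinuousLinearMap.fst ℝ (Pt n) (Pt n)).prod
        (ContinuousLinearMap.pi fun a => ∑ b,
          (G q.1 a b • ((ContinuousLinearMap.proj b).comp (ContinuousLinearMap.snd ℝ (Pt n) (Pt n)))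
            + q.2 b • ((fderiv ℝ (fun x => G x a b) q.1).comp (ContinuousLinearMap.fst ℝ (Pt n) (Pt n))))))
        (completeLift g q)).2 a
        = ∑ b, (G x a b * (∑ c, pd (fun y => g y b) c x * v c)
            + v b * (∑ c, g x c * pd (fun y => G y a b) c x)) := by
      simp only [ContinuousLinearMap.prod_apply, ContinuousLinearMap.pi_apply,
        ContinuousLinearMap.sum_apply, ContinuousLinearMap.add_apply,
        ContinuousLinearMap.smul_apply, ContinuousLinearMap.comp_apply,
        ContinuousLinearMap.coe_fst', ContinuousLinearMap.coe_snd',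
        ContinuousLinearMap.proj_apply, smul_eq_mul, completeLift]
      exact Finset.sum_congr rfl fun b _ => by
        rw [fderiv_apply_sum_pd]
    rw [hleft]
    -- evaluate the right-hand side
    have hright : (gradGc (leviCivita G Ginv) (momF g) (flatG G q)).2 a
        = (∑ d, p d * pd (fun y => g y d) a x)
          + 2 * ∑ d, ∑ c, p d * leviCivita G Ginv x d a c * g x c := by
      simp only [gradGc, pdX_momF g hg, pdP_momF g hg, hfst, hsnd]
    rw [hright]
    -- key contraction identity
    have hcontr : ∀ e, (∑ d, p d * Ginv x d e) = v e := by
      intro e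
      have hmul : ∀ f, (∑ d, G x d f * v f * Ginv x d e)
          = (1 : Matrix (Fin n) (Fin n) ℝ) f e * v f := by
        intro f
        rw [← hGinv1 x, Matrix.mul_apply, Finset.sum_mul]
        exact Finset.sum_congr rfl fun d _ => by rw [hsym x d f]; ring
      calc (∑ d, p d * Ginv x d e)
          = ∑ d, ∑ f, G x d f * v f * Ginv x d e :=
            Finset.sum_congr rfl fun d _ => by rw [hpdef, Finset.sum_mul]
        _ = ∑ f, ∑ d, G x d f * v f * Ginv x d e := Finset.sum_comm
        _ = ∑ f, (1 : Matrix (Fin n) (Fin n) ℝ) f e * v f :=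
            Finset.sum_congr rfl fun f _ => hmul f
        _ = v e := by simp [Matrix.one_apply]
    -- the Christoffel part
    set D : Fin n → Fin n → ℝ := fun e c =>
      pd (fun y => G y e a) c x + pd (fun y => G y e c) a x - pd (fun y => G y a c) e x
      with hDdef
    have hchr : 2 * (∑ d, ∑ c, p d * leviCivita G Ginv x d a c * g x c)
        = ∑ e, v e * (∑ c, g x c * D e c) := by
      calc 2 * (∑ d, ∑ c, p d * leviCivita G Ginv x d a c * g x c)
          = ∑ d, ∑ c, ∑ e, (p d * Ginv x d e) * (D e c * g x c) := by
            rw [Finset.mul_sum]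
            refine Finset.sum_congr rfl fun d _ => ?_
            rw [Finset.mul_sum]
            refine Finset.sum_congr rfl fun c _ => ?_
            show 2 * (p d * leviCivita G Ginv x d a c * g x c) = _
            rw [leviCivita, hDdef]
            rw [show 2 * (p d * (1 / 2 * ∑ e, Ginv x d e *
                (pd (fun y => G y e a) c x + pd (fun y => G y e c) a x
                  - pd (fun y => G y a c) e x)) * g x c)
              = (∑ e, Ginv x d e * (pd (fun y => G y e a) c x + pd (fun y => G y e c) a x
                  - pd (fun y => G y a c) e x)) * (p d * g x c) from by ring,
              Finset.sum_mul]
            exact Finset.sum_congr rfl fun e _ => by ring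
        _ = ∑ e, ∑ c, ∑ d, (p d * Ginv x d e) * (D e c * g x c) :=
            sum_comm3 _
        _ = ∑ e, ∑ c, v e * (D e c * g x c) := by
            refine Finset.sum_congr rfl fun e _ => Finset.sum_congr rfl fun c _ => ?_
            rw [← Finset.sum_mul, hcontr e]
        _ = ∑ e, v e * (∑ c, g x c * D e c) := by
            refine Finset.sum_congr rfl fun e _ => ?_
            rw [Finset.mul_sum]
            exact Finset.sum_congr rfl fun c _ => by ring
    rw [hchr]
    -- first term of the right-hand side
    have hfirst : (∑ d, p d * pd (fun y => g y d) a x)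
        = ∑ e, v e * (∑ c, G x e c * pd (fun y => g y c) a x) := by
      calc (∑ d, p d * pd (fun y => g y d) a x)
          = ∑ d, ∑ e, G x d e * v e * pd (fun y => g y d) a x :=
            Finset.sum_congr rfl fun d _ => by rw [hpdef, Finset.sum_mul]
        _ = ∑ e, ∑ d, G x d e * v e * pd (fun y => g y d) a x := Finset.sum_comm
        _ = ∑ e, v e * (∑ c, G x e c * pd (fun y => g y c) a x) := by
            refine Finset.sum_congr rfl fun e _ => ?_
            rw [Finset.mul_sum]
            exact Finset.sum_congr rfl fun c _ => by rw [hsym x c e]; ring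
    rw [hfirst]
    -- reorganize the left-hand side
    have hlhs : (∑ b, (G x a b * (∑ c, pd (fun y => g y b) c x * v c)
            + v b * (∑ c, g x c * pd (fun y => G y a b) c x)))
        = ∑ e, v e * ((∑ c, G x a c * pd (fun y => g y c) e x)
            + (∑ c, g x c * pd (fun y => G y a e) c x)) := by
      rw [Finset.sum_add_distrib]
      have hA : (∑ b, G x a b * (∑ c, pd (fun y => g y b) c x * v c))
          = ∑ e, v e * (∑ c, G x a c * pd (fun y => g y c) e x) := by
        calc (∑ b, G x a b * (∑ c, pd (fun y => g y b) c x * v c))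
            = ∑ b, ∑ c, G x a b * (pd (fun y => g y b) c x * v c) :=
              Finset.sum_congr rfl fun b _ => by rw [Finset.mul_sum]
          _ = ∑ c, ∑ b, G x a b * (pd (fun y => g y b) c x * v c) := Finset.sum_comm
          _ = ∑ e, v e * (∑ c, G x a c * pd (fun y => g y c) e x) := by
              refine Finset.sum_congr rfl fun e _ => ?_
              rw [Finset.mul_sum]
              exact Finset.sum_congr rfl fun c _ => by ring
      rw [hA, ← Finset.sum_add_distrib]
      exact Finset.sum_congr rfl fun e _ => by ring
    rw [hlhs, ← Finset.sum_add_distrib]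
    -- per-index identity using closedness
    refine Finset.sum_congr rfl fun e _ => ?_
    have hper : ((∑ c, G x a c * pd (fun y => g y c) e x)
          + (∑ c, g x c * pd (fun y => G y a e) c x))
        = (∑ c, G x e c * pd (fun y => g y c) a x) + ∑ c, g x c * D e c := by
      have H := hclosed x a e
      rw [pd_flat G hG g hg a e x, pd_flat G hG g hg e a x] at H
      rw [Finset.sum_add_distrib, Finset.sum_add_distrib] at H
      have hs2 : (∑ c, g x c * pd (fun y => G y a e) c x)
          = ∑ c, g x c * pd (fun y => G y e a) c x := by
        refine Finset.sum_congr rfl fun c _ => ?_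
        have hfe : (fun y => G y a e) = fun y => G y e a := funext fun y => hsym y a e
        rw [hfe]
      have hd : (∑ c, g x c * D e c)
          = ((∑ c, g x c * pd (fun y => G y e a) c x)
              + (∑ c, g x c * pd (fun y => G y e c) a x))
            - ∑ c, g x c * pd (fun y => G y a c) e x := by
        rw [← Finset.sum_add_distrib, ← Finset.sum_sub_distrib]
        exact Finset.sum_congr rfl fun c _ => by rw [hDdef]; ring
      rw [hs2, hd]
      linarith [H]
    rw [hper, mul_add]
end
end

section
/- For a locally gradient control system with drift g_0 and input vector fields g_j = grad_G V_j on a pseudo-Riemannian manifold (M,G), writing ⟨·:·⟩ for the symmetric product of the Levi-Civita connection of G, one has for all choices X_1,…,X_{s1}, Y_1,…,Y_{s2} among {g_0,…,g_m} such that each X_r, Y_r is itself a gradient vector field of some function, and for all j,k: L_{⟨X_1:⟨…:⟨X_{s1}:g_j⟩…⟩⟩}[L_{Y_1}…L_{Y_{s2}} V_k] = L_{⟨Y_1:⟨…:⟨Y_{s2}:g_k⟩…⟩⟩}[L_{X_1}…L_{X_{s1}} V_j]; that is, the system is compatible with the Levi-Civita connection of its metric. -/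
open scoped BigOperators
noncomputable section

/-- Iterated symmetric products `⟨X₁ : ⟨X₂ : ⟨… : ⟨Xₛ : g⟩…⟩⟩⟩`. -/
def symProdList {n : ℕ} (Γ : Chr n) (L : List (VF n)) (g : VF n) : VF n :=
  L.foldr (fun X acc => symProd Γ X acc) g

/-- Iterated Lie derivatives `L_{X₁} L_{X₂} … L_{Xₛ} V`. -/
def lieDerList {n : ℕ} (L : List (VF n)) (V : Pt n → ℝ) : Pt n → ℝ :=
  L.foldr (fun X acc => dirDer X acc) V

/-! ### Auxiliary lemmas -/

section Aux
variable {n : ℕ}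

lemma contDiff_pd {f : Pt n → ℝ} (hf : ContDiff ℝ (⊤ : ℕ∞) f) (b : Fin n) :
    ContDiff ℝ (⊤ : ℕ∞) (fun x => pd f b x) :=
  (hf.fderiv_right (m := (⊤ : ℕ∞)) (by simp)).clm_apply contDiff_const

lemma pd_mul {f g : Pt n → ℝ} {x : Pt n} (hf : DifferentiableAt ℝ f x)
    (hg : DifferentiableAt ℝ g x) (b : Fin n) :
    pd (fun y => f y * g y) b x = pd f b x * g x + f x * pd g b x := by
  simp [pd, fderiv_fun_mul hf hg]; ring

lemma pd_sum {ι : Type*} (s : Finset ι) {f : ι → Pt n → ℝ} {x : Pt n}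
    (hf : ∀ i ∈ s, DifferentiableAt ℝ (f i) x) (b : Fin n) :
    pd (fun y => ∑ i ∈ s, f i y) b x = ∑ i ∈ s, pd (f i) b x := by
  simp [pd, fderiv_fun_sum hf]

lemma pd_const {x : Pt n} (c : ℝ) (b : Fin n) : pd (fun _ => c) b x = 0 := by
  simp [pd]

lemma pd_comm {f : Pt n → ℝ} (hf : ContDiff ℝ (⊤ : ℕ∞) f) (b c : Fin n) (x : Pt n) :
    pd (fun y => pd f b y) c x = pd (fun y => pd f c y) b x := by
  have hd : Differentiable ℝ (fderiv ℝ f) :=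
    (hf.fderiv_right (m := (⊤ : ℕ∞)) (by simp)).differentiable (by simp)
  have key : ∀ v w : Fin n, fderiv ℝ (fun y => fderiv ℝ f y (Pi.single v 1)) x (Pi.single w 1)
      = fderiv ℝ (fderiv ℝ f) x (Pi.single w 1) (Pi.single v 1) := by
    intro v w
    rw [fderiv_clm_apply (hd x) (differentiableAt_const (Pi.single v (1:ℝ)))]
    simp
  have hsymm := (hf.contDiffAt (x := x)).isSymmSndFDerivAt (by
    rw [minSmoothness_of_isRCLikeNormedField]; exact WithTop.coe_le_coe.mpr (le_top : (2:ℕ∞) ≤ ⊤))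
  simp only [pd, key]
  exact hsymm.eq _ _

lemma sum3_rot {M : Type*} [AddCommMonoid M] (f : Fin n → Fin n → Fin n → M) :
    ∑ b, ∑ c, ∑ d, f b c d = ∑ d, ∑ b, ∑ c, f b c d := by
  rw [show (∑ b, ∑ c, ∑ d, f b c d) = ∑ b, ∑ d, ∑ c, f b c d from
    Finset.sum_congr rfl fun b _ => Finset.sum_comm]
  exact Finset.sum_comm

variable {G Ginv : Pt n → Matrix (Fin n) (Fin n) ℝ}

open Matrix in
lemma ginv_symm (hpair : MetricPair G Ginv) (x : Pt n) (i j : Fin n) :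
    Ginv x i j = Ginv x j i := by
  have h1 : (Ginv x)ᵀ * G x = 1 := by
    have := congrArg Matrix.transpose (hpair.2.1 x)
    rw [Matrix.transpose_mul, Matrix.transpose_one] at this
    rwa [(hpair.1 x)] at this
  have h2 : (Ginv x)ᵀ = Ginv x := by
    calc (Ginv x)ᵀ = (Ginv x)ᵀ * (G x * Ginv x) := by rw [hpair.2.1 x, Matrix.mul_one]
    _ = ((Ginv x)ᵀ * G x) * Ginv x := by rw [Matrix.mul_assoc]
    _ = Ginv x := by rw [h1, Matrix.one_mul]
  conv_lhs => rw [← h2]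
  rfl

lemma g_symm (hpair : MetricPair G Ginv) (x : Pt n) (i j : Fin n) :
    G x i j = G x j i := ((hpair.1 x).apply i j).symm

/-- Derivative of the inverse metric. -/
lemma pd_Ginv (hG : SmoothMat G) (hGinv : SmoothMat Ginv) (hpair : MetricPair G Ginv)
    (x : Pt n) (d a b : Fin n) :
    pd (fun y => Ginv y a b) d x
      = -∑ u, ∑ v, Ginv x a u * pd (fun y => G y u v) d x * Ginv x v b := by
  have hGd : ∀ u v, DifferentiableAt ℝ (fun y => G y u v) x :=
    fun u v => ((hG u v).differentiable (by simp)) x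
  have hGinvd : ∀ u v, DifferentiableAt ℝ (fun y => Ginv y u v) x :=
    fun u v => ((hGinv u v).differentiable (by simp)) x
  have step1 : ∀ u w : Fin n,
      (∑ c, (pd (fun y => G y u c) d x * Ginv x c w + G x u c * pd (fun y => Ginv y c w) d x))
        = 0 := by
    intro u w
    have hconst : (fun y => ∑ c, G y u c * Ginv y c w)
        = fun _ => (1 : Matrix (Fin n) (Fin n) ℝ) u w := by
      funext y
      rw [← Matrix.mul_apply, hpair.2.1 y]
    have h0 : pd (fun y => ∑ c, G y u c * Ginv y c w) d x = 0 := by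
      rw [hconst]; exact pd_const _ _
    rw [← h0, pd_sum _ (fun c _ => (hGd u c).fun_mul (hGinvd c w)) d]
    exact Finset.sum_congr rfl fun c _ => (pd_mul (hGd u c) (hGinvd c w) d).symm
  have step2 : ∀ u w : Fin n,
      (∑ c, G x u c * pd (fun y => Ginv y c w) d x)
        = -∑ c, pd (fun y => G y u c) d x * Ginv x c w := by
    intro u w
    have := step1 u w
    rw [Finset.sum_add_distrib] at this
    linarith
  calc pd (fun y => Ginv y a b) d x
      = ∑ v, (if a = v then (1:ℝ) else 0) * pd (fun y => Ginv y v b) d x := by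
        simp
    _ = ∑ v, ((Ginv x * G x) a v) * pd (fun y => Ginv y v b) d x := by
        rw [hpair.2.2 x]
        exact Finset.sum_congr rfl fun v _ => by rw [Matrix.one_apply]
    _ = ∑ v, ∑ u, Ginv x a u * G x u v * pd (fun y => Ginv y v b) d x := by
        refine Finset.sum_congr rfl fun v _ => ?_
        rw [Matrix.mul_apply, Finset.sum_mul]
    _ = ∑ u, Ginv x a u * (∑ v, G x u v * pd (fun y => Ginv y v b) d x) := by
        rw [Finset.sum_comm]
        exact Finset.sum_congr rfl fun u _ => by
          rw [Finset.mul_sum]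
          exact Finset.sum_congr rfl fun v _ => by ring
    _ = ∑ u, Ginv x a u * (-∑ v, pd (fun y => G y u v) d x * Ginv x v b) := by
        exact Finset.sum_congr rfl fun u _ => by rw [step2 u b]
    _ = -∑ u, ∑ v, Ginv x a u * pd (fun y => G y u v) d x * Ginv x v b := by
        rw [← Finset.sum_neg_distrib]
        refine Finset.sum_congr rfl fun u _ => ?_
        rw [mul_neg, Finset.mul_sum]
        exact neg_inj.mpr (Finset.sum_congr rfl fun v _ => by ring)

lemma alg (a : Fin n) (Gi : Fin n → Fin n → ℝ) (DG DGi : Fin n → Fin n → Fin n → ℝ)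
    (fp gp F H : Fin n → ℝ) (f2 g2 : Fin n → Fin n → ℝ)
    (hGi : ∀ i j, Gi i j = Gi j i)
    (hDG : ∀ d u v, DG d u v = DG d v u)
    (hDGi : ∀ d i j, DGi d i j = -∑ u, ∑ v, Gi i u * DG d u v * Gi v j)
    (hf2 : ∀ i j, f2 i j = f2 j i) (hg2 : ∀ i j, g2 i j = g2 j i)
    (hF : ∀ b, F b = ∑ p, Gi b p * fp p) (hH : ∀ b, H b = ∑ p, Gi b p * gp p) :
    ((∑ b, F b * (∑ q, (DGi b a q * gp q + Gi a q * g2 q b)))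
      + ∑ b, ∑ c, ((1/2) * ∑ d, Gi a d * (DG c d b + DG b d c - DG d b c)) * F b * H c)
    + ((∑ b, H b * (∑ q, (DGi b a q * fp q + Gi a q * f2 q b)))
      + ∑ b, ∑ c, ((1/2) * ∑ d, Gi a d * (DG c d b + DG b d c - DG d b c)) * H b * F c)
    = ∑ d, Gi a d * (∑ p, ∑ q,
        ((f2 p d * Gi p q + fp p * DGi d p q) * gp q + fp p * Gi p q * g2 q d)) := by
  have hsplit1 : (∑ b, F b * (∑ q, (DGi b a q * gp q + Gi a q * g2 q b)))
      = (∑ b, ∑ q, F b * (DGi b a q * gp q)) + ∑ b, ∑ q, F b * (Gi a q * g2 q b) := by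
    simp only [Finset.mul_sum, mul_add, Finset.sum_add_distrib]
  have hsplit2 : (∑ b, H b * (∑ q, (DGi b a q * fp q + Gi a q * f2 q b)))
      = (∑ b, ∑ q, H b * (DGi b a q * fp q)) + ∑ b, ∑ q, H b * (Gi a q * f2 q b) := by
    simp only [Finset.mul_sum, mul_add, Finset.sum_add_distrib]
  have cA1 : (∑ b, ∑ q, F b * (DGi b a q * gp q))
      = -∑ b, ∑ u, ∑ v, Gi a u * DG b u v * F b * H v := by
    simp only [hDGi, hH, Finset.mul_sum, Finset.sum_mul, mul_neg, neg_mul,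
      Finset.sum_neg_distrib, ← Finset.sum_neg_distrib]
    refine Finset.sum_congr rfl fun b _ => ?_
    rw [Finset.sum_comm]
    refine Finset.sum_congr rfl fun u _ => ?_
    rw [Finset.sum_comm]
    exact Finset.sum_congr rfl fun v _ => Finset.sum_congr rfl fun q _ => by ring
  have cA3 : (∑ b, ∑ q, H b * (DGi b a q * fp q))
      = -∑ b, ∑ u, ∑ v, Gi a u * DG b u v * H b * F v := by
    simp only [hDGi, hF, Finset.mul_sum, Finset.sum_mul, mul_neg, neg_mul,
      Finset.sum_neg_distrib, ← Finset.sum_neg_distrib]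
    refine Finset.sum_congr rfl fun b _ => ?_
    rw [Finset.sum_comm]
    refine Finset.sum_congr rfl fun u _ => ?_
    rw [Finset.sum_comm]
    exact Finset.sum_congr rfl fun v _ => Finset.sum_congr rfl fun q _ => by ring
  have cA2 : (∑ b, ∑ q, F b * (Gi a q * g2 q b)) = ∑ d, ∑ q, Gi a d * F q * g2 q d := by
    rw [Finset.sum_comm]
    exact Finset.sum_congr rfl fun d _ => Finset.sum_congr rfl fun q _ => by
      rw [hg2 d q]; ring
  have cA4 : (∑ b, ∑ q, H b * (Gi a q * f2 q b)) = ∑ d, ∑ p, Gi a d * f2 p d * H p := by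
    rw [Finset.sum_comm]
    exact Finset.sum_congr rfl fun d _ => Finset.sum_congr rfl fun p _ => by
      rw [hf2 d p]; ring
  have cA5 : (∑ b, ∑ c, ((1/2) * ∑ d, Gi a d * (DG c d b + DG b d c - DG d b c)) * F b * H c)
      + (∑ b, ∑ c, ((1/2) * ∑ d, Gi a d * (DG c d b + DG b d c - DG d b c)) * H b * F c)
      = ((∑ b, ∑ u, ∑ v, Gi a u * DG b u v * F b * H v)
          + (∑ b, ∑ u, ∑ v, Gi a u * DG b u v * H b * F v))
        - ∑ d, ∑ u, ∑ v, Gi a d * DG d u v * F u * H v := by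
    have swap2 : (∑ b, ∑ c, ((1/2) * ∑ d, Gi a d * (DG c d b + DG b d c - DG d b c)) * H b * F c)
        = ∑ b, ∑ c, ((1/2) * ∑ d, Gi a d * (DG b d c + DG c d b - DG d c b)) * F b * H c := by
      rw [Finset.sum_comm]
      exact Finset.sum_congr rfl fun b _ => Finset.sum_congr rfl fun c _ => by ring
    rw [swap2]
    have hmerge : ∀ b c : Fin n,
        ((1/2) * ∑ d, Gi a d * (DG c d b + DG b d c - DG d b c)) * F b * H c
        + ((1/2) * ∑ d, Gi a d * (DG b d c + DG c d b - DG d c b)) * F b * H c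
        = (∑ d, Gi a d * DG c d b * F b * H c)
          + (∑ d, Gi a d * DG b d c * F b * H c)
          - ∑ d, Gi a d * DG d b c * F b * H c := by
      intro b c
      have e2 : (∑ d, Gi a d * (DG b d c + DG c d b - DG d c b))
          = ∑ d, Gi a d * (DG c d b + DG b d c - DG d b c) :=
        Finset.sum_congr rfl fun d _ => by rw [hDG d c b]; ring
      rw [e2]
      have e0 : ((1/2) * ∑ d, Gi a d * (DG c d b + DG b d c - DG d b c)) * F b * H c
          + ((1/2) * ∑ d, Gi a d * (DG c d b + DG b d c - DG d b c)) * F b * H c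
          = (∑ d, Gi a d * (DG c d b + DG b d c - DG d b c)) * (F b * H c) := by ring
      rw [e0, Finset.sum_mul]
      rw [show (∑ d, Gi a d * (DG c d b + DG b d c - DG d b c) * (F b * H c))
          = ∑ d, (Gi a d * DG c d b * F b * H c + Gi a d * DG b d c * F b * H c
              - Gi a d * DG d b c * F b * H c) from
        Finset.sum_congr rfl fun d _ => by ring]
      rw [Finset.sum_sub_distrib, Finset.sum_add_distrib]
    rw [← Finset.sum_add_distrib]
    rw [show (∑ b, ((∑ c, ((1/2) * ∑ d, Gi a d * (DG c d b + DG b d c - DG d b c)) * F b * H c)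
          + ∑ c, ((1/2) * ∑ d, Gi a d * (DG b d c + DG c d b - DG d c b)) * F b * H c))
        = ∑ b, ∑ c, (((1/2) * ∑ d, Gi a d * (DG c d b + DG b d c - DG d b c)) * F b * H c
          + ((1/2) * ∑ d, Gi a d * (DG b d c + DG c d b - DG d c b)) * F b * H c) from
      Finset.sum_congr rfl fun b _ => (Finset.sum_add_distrib).symm]
    rw [show (∑ b, ∑ c, (((1/2) * ∑ d, Gi a d * (DG c d b + DG b d c - DG d b c)) * F b * H c
          + ((1/2) * ∑ d, Gi a d * (DG b d c + DG c d b - DG d c b)) * F b * H c))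
        = ∑ b, ∑ c, ((∑ d, Gi a d * DG c d b * F b * H c)
          + (∑ d, Gi a d * DG b d c * F b * H c)
          - ∑ d, Gi a d * DG d b c * F b * H c) from
      Finset.sum_congr rfl fun b _ => Finset.sum_congr rfl fun c _ => hmerge b c]
    simp only [Finset.sum_add_distrib, Finset.sum_sub_distrib]
    have hT1 : (∑ b, ∑ c, ∑ d, Gi a d * DG c d b * F b * H c)
        = ∑ b, ∑ u, ∑ v, Gi a u * DG b u v * H b * F v := by
      rw [sum3_rot, sum3_rot]
      exact Finset.sum_congr rfl fun c _ => Finset.sum_congr rfl fun d _ =>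
        Finset.sum_congr rfl fun b _ => by ring
    have hT2 : (∑ b, ∑ c, ∑ d, Gi a d * DG b d c * F b * H c)
        = ∑ b, ∑ u, ∑ v, Gi a u * DG b u v * F b * H v := by
      refine Finset.sum_congr rfl fun b _ => ?_
      rw [Finset.sum_comm]
    have hT3 : (∑ b, ∑ c, ∑ d, Gi a d * DG d b c * F b * H c)
        = ∑ d, ∑ u, ∑ v, Gi a d * DG d u v * F u * H v := by
      rw [sum3_rot]
    rw [hT1, hT2, hT3]
    ring
  have cRHS : (∑ d, Gi a d * (∑ p, ∑ q,
        ((f2 p d * Gi p q + fp p * DGi d p q) * gp q + fp p * Gi p q * g2 q d)))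
      = ((∑ d, ∑ p, Gi a d * f2 p d * H p)
          - ∑ d, ∑ u, ∑ v, Gi a d * DG d u v * F u * H v)
        + ∑ d, ∑ q, Gi a d * F q * g2 q d := by
    have expand : ∀ d : Fin n, Gi a d * (∑ p, ∑ q,
          ((f2 p d * Gi p q + fp p * DGi d p q) * gp q + fp p * Gi p q * g2 q d))
        = ((∑ p, ∑ q, Gi a d * (f2 p d * Gi p q * gp q))
            + ∑ p, ∑ q, Gi a d * (fp p * DGi d p q * gp q))
          + ∑ p, ∑ q, Gi a d * (fp p * Gi p q * g2 q d) := by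
      intro d
      rw [Finset.mul_sum]
      rw [show (∑ p, Gi a d * ∑ q,
            ((f2 p d * Gi p q + fp p * DGi d p q) * gp q + fp p * Gi p q * g2 q d))
          = ∑ p, ∑ q, (Gi a d * (f2 p d * Gi p q * gp q) + Gi a d * (fp p * DGi d p q * gp q)
              + Gi a d * (fp p * Gi p q * g2 q d)) from
        Finset.sum_congr rfl fun p _ => by
          rw [Finset.mul_sum]; exact Finset.sum_congr rfl fun q _ => by ring]
      simp only [Finset.sum_add_distrib]
    rw [show (∑ d, Gi a d * (∑ p, ∑ q,
          ((f2 p d * Gi p q + fp p * DGi d p q) * gp q + fp p * Gi p q * g2 q d)))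
        = ∑ d, (((∑ p, ∑ q, Gi a d * (f2 p d * Gi p q * gp q))
            + ∑ p, ∑ q, Gi a d * (fp p * DGi d p q * gp q))
          + ∑ p, ∑ q, Gi a d * (fp p * Gi p q * g2 q d)) from
      Finset.sum_congr rfl fun d _ => expand d]
    simp only [Finset.sum_add_distrib]
    have hU1 : (∑ d, ∑ p, ∑ q, Gi a d * (f2 p d * Gi p q * gp q))
        = ∑ d, ∑ p, Gi a d * f2 p d * H p := by
      refine Finset.sum_congr rfl fun d _ => Finset.sum_congr rfl fun p _ => ?_
      rw [hH p, Finset.mul_sum]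
      exact Finset.sum_congr rfl fun q _ => by ring
    have hU2 : (∑ d, ∑ p, ∑ q, Gi a d * (fp p * DGi d p q * gp q))
        = -∑ d, ∑ u, ∑ v, Gi a d * DG d u v * F u * H v := by
      simp only [hDGi, hF, hH, Finset.mul_sum, Finset.sum_mul, mul_neg, neg_mul,
        Finset.sum_neg_distrib, ← Finset.sum_neg_distrib]
      refine Finset.sum_congr rfl fun d _ => ?_
      rw [show (∑ p, ∑ q, ∑ u, ∑ v,
            -(Gi a d * (fp p * (Gi p u * DG d u v * Gi v q) * gp q)))
          = ∑ u, ∑ v, ∑ p, ∑ q,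
            -(Gi a d * (fp p * (Gi p u * DG d u v * Gi v q) * gp q)) from by
        rw [show (∑ p, ∑ q, ∑ u, ∑ v,
              -(Gi a d * (fp p * (Gi p u * DG d u v * Gi v q) * gp q)))
            = ∑ p, ∑ u, ∑ q, ∑ v,
              -(Gi a d * (fp p * (Gi p u * DG d u v * Gi v q) * gp q)) from
          Finset.sum_congr rfl fun p _ => Finset.sum_comm]
        rw [Finset.sum_comm]
        refine Finset.sum_congr rfl fun u _ => ?_
        rw [show (∑ p, ∑ q, ∑ v,
              -(Gi a d * (fp p * (Gi p u * DG d u v * Gi v q) * gp q)))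
            = ∑ p, ∑ v, ∑ q,
              -(Gi a d * (fp p * (Gi p u * DG d u v * Gi v q) * gp q)) from
          Finset.sum_congr rfl fun p _ => Finset.sum_comm]
        exact Finset.sum_comm]
      refine Finset.sum_congr rfl fun u _ => Finset.sum_congr rfl fun v _ => ?_
      rw [Finset.sum_comm]
      refine Finset.sum_congr rfl fun p _ => Finset.sum_congr rfl fun q _ => ?_
      simp only [hGi u, hGi v]
      ring
    have hU3 : (∑ d, ∑ p, ∑ q, Gi a d * (fp p * Gi p q * g2 q d))
        = ∑ d, ∑ q, Gi a d * F q * g2 q d := by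
      refine Finset.sum_congr rfl fun d _ => ?_
      rw [Finset.sum_comm]
      refine Finset.sum_congr rfl fun q _ => ?_
      rw [hF q, Finset.mul_sum, Finset.sum_mul]
      exact Finset.sum_congr rfl fun p _ => by rw [hGi q p]; ring
    rw [hU1, hU2, hU3]
    ring
  rw [hsplit1, hsplit2, cA1, cA2, cA3, cA4, cRHS]
  linear_combination cA5

lemma pd_grad_comp (hGinv : SmoothMat Ginv) {g : Pt n → ℝ} (hg : ContDiff ℝ (⊤ : ℕ∞) g)
    (a b : Fin n) (x : Pt n) :
    pd (fun y => gradV Ginv g y a) b x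
      = ∑ q, (pd (fun y => Ginv y a q) b x * pd g q x
          + Ginv x a q * pd (fun y => pd g q y) b x) := by
  have h1 : (fun y => gradV Ginv g y a) = fun y => ∑ q, Ginv y a q * pd g q y := rfl
  rw [h1, pd_sum _ (fun q _ => (((hGinv a q).differentiable (by simp)) x).fun_mul
    (((contDiff_pd hg q).differentiable (by simp)) x)) b]
  exact Finset.sum_congr rfl fun q _ =>
    pd_mul (((hGinv a q).differentiable (by simp)) x)
      (((contDiff_pd hg q).differentiable (by simp)) x) b

lemma pd_beltrami (hGinv : SmoothMat Ginv) {f g : Pt n → ℝ}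
    (hf : ContDiff ℝ (⊤ : ℕ∞) f) (hg : ContDiff ℝ (⊤ : ℕ∞) g) (d : Fin n) (x : Pt n) :
    pd (beltrami Ginv f g) d x
      = ∑ p, ∑ q, ((pd (fun y => pd f p y) d x * Ginv x p q
            + pd f p x * pd (fun y => Ginv y p q) d x) * pd g q x
          + pd f p x * Ginv x p q * pd (fun y => pd g q y) d x) := by
  have hfd : ∀ p, DifferentiableAt ℝ (fun y => pd f p y) x :=
    fun p => ((contDiff_pd hf p).differentiable (by simp)) x
  have hgd : ∀ q, DifferentiableAt ℝ (fun y => pd g q y) x :=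
    fun q => ((contDiff_pd hg q).differentiable (by simp)) x
  have hid : ∀ p q, DifferentiableAt ℝ (fun y => Ginv y p q) x :=
    fun p q => ((hGinv p q).differentiable (by simp)) x
  have h1 : beltrami Ginv f g = fun y => ∑ p, ∑ q, pd f p y * Ginv y p q * pd g q y := rfl
  rw [h1, pd_sum _ (fun p _ => DifferentiableAt.fun_sum
    (fun q _ => (((hfd p).fun_mul (hid p q)).fun_mul (hgd q)))) d]
  refine Finset.sum_congr rfl fun p _ => ?_
  rw [pd_sum _ (fun q _ => (((hfd p).fun_mul (hid p q)).fun_mul (hgd q))) d]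
  refine Finset.sum_congr rfl fun q _ => ?_
  rw [pd_mul ((hfd p).fun_mul (hid p q)) (hgd q) d, pd_mul (hfd p) (hid p q) d]

lemma smooth_beltrami (hGinv : SmoothMat Ginv) {f g : Pt n → ℝ}
    (hf : ContDiff ℝ (⊤ : ℕ∞) f) (hg : ContDiff ℝ (⊤ : ℕ∞) g) :
    ContDiff ℝ (⊤ : ℕ∞) (beltrami Ginv f g) := by
  refine ContDiff.sum fun p _ => ContDiff.sum fun q _ => ?_
  exact ((contDiff_pd hf p).mul (hGinv p q)).mul (contDiff_pd hg q)

/-- Key geometric fact: the symmetric product of two gradient vector fields is the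
gradient of the Beltrami bracket. -/
lemma symProd_grad (hG : SmoothMat G) (hGinv : SmoothMat Ginv) (hpair : MetricPair G Ginv)
    {f g : Pt n → ℝ} (hf : ContDiff ℝ (⊤ : ℕ∞) f) (hg : ContDiff ℝ (⊤ : ℕ∞) g) :
    symProd (leviCivita G Ginv) (gradV Ginv f) (gradV Ginv g)
      = gradV Ginv (beltrami Ginv f g) := by
  funext x a
  have e1 : symProd (leviCivita G Ginv) (gradV Ginv f) (gradV Ginv g) x a
      = ((∑ b, gradV Ginv f x b * pd (fun y => gradV Ginv g y a) b x)
          + ∑ b, ∑ c, leviCivita G Ginv x a b c * gradV Ginv f x b * gradV Ginv g x c)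
        + ((∑ b, gradV Ginv g x b * pd (fun y => gradV Ginv f y a) b x)
          + ∑ b, ∑ c, leviCivita G Ginv x a b c * gradV Ginv g x b * gradV Ginv f x c) := rfl
  have e2 : gradV Ginv (beltrami Ginv f g) x a
      = ∑ d, Ginv x a d * pd (beltrami Ginv f g) d x := rfl
  rw [e1, e2]
  simp only [pd_grad_comp hGinv hg, pd_grad_comp hGinv hf, pd_beltrami hGinv hf hg]
  simp only [leviCivita, gradV]
  exact alg a (fun i j => Ginv x i j) (fun d u v => pd (fun y => G y u v) d x)
    (fun d i j => pd (fun y => Ginv y i j) d x)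
    (fun p => pd f p x) (fun p => pd g p x)
    (fun b => ∑ p, Ginv x b p * pd f p x) (fun b => ∑ p, Ginv x b p * pd g p x)
    (fun p d => pd (fun y => pd f p y) d x) (fun p d => pd (fun y => pd g p y) d x)
    (fun i j => ginv_symm hpair x i j)
    (fun d u v => by
      show pd (fun y => G y u v) d x = pd (fun y => G y v u) d x
      rw [show (fun y => G y u v) = fun y => G y v u from funext fun y => g_symm hpair y u v])
    (fun d i j => pd_Ginv hG hGinv hpair x d i j)
    (fun i j => pd_comm hf i j x) (fun i j => pd_comm hg i j x)
    (fun b => rfl) (fun b => rfl)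

lemma dirDer_grad (hpair : MetricPair G Ginv) {f : Pt n → ℝ} (g : Pt n → ℝ) :
    dirDer (gradV Ginv f) g = beltrami Ginv f g := by
  funext x
  have e1 : dirDer (gradV Ginv f) g x = ∑ b, (∑ p, Ginv x b p * pd f p x) * pd g b x := rfl
  have e2 : beltrami Ginv f g x = ∑ p, ∑ b, pd f p x * Ginv x p b * pd g b x := rfl
  rw [e1, e2, Finset.sum_comm]
  refine Finset.sum_congr rfl fun p _ => ?_
  rw [Finset.sum_mul]
  exact Finset.sum_congr rfl fun b _ => by rw [ginv_symm hpair x p b]; ring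

lemma beltrami_symm (hpair : MetricPair G Ginv) (f g : Pt n → ℝ) :
    beltrami Ginv f g = beltrami Ginv g f := by
  funext x
  show (∑ a, ∑ b, pd f a x * Ginv x a b * pd g b x)
    = ∑ a, ∑ b, pd g a x * Ginv x a b * pd f b x
  rw [Finset.sum_comm]
  exact Finset.sum_congr rfl fun a _ => Finset.sum_congr rfl fun b _ => by
    rw [ginv_symm hpair x b a]; ring


end Aux

/-- A locally gradient control system is compatible (condition (a)) with the Levi-Civita
connection of its metric: if all the vector fields involved are gradients of smooth
functions, then
`L_{⟨X₁:⟨…:⟨X_{s₁}:grad Vj⟩…⟩⟩}[L_{Y₁}…L_{Y_{s₂}} Vk]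
  = L_{⟨Y₁:⟨…:⟨Y_{s₂}:grad Vk⟩…⟩⟩}[L_{X₁}…L_{X_{s₁}} Vj]`. -/
theorem gradient_system_compatible {n : ℕ}
    (G Ginv : Pt n → Matrix (Fin n) (Fin n) ℝ)
    (hG : SmoothMat G) (hGinv : SmoothMat Ginv) (hpair : MetricPair G Ginv)
    (Xs Ys : List (VF n)) (Vj Vk : Pt n → ℝ)
    (hXs : ∀ Z ∈ Xs, ∃ W : Pt n → ℝ, ContDiff ℝ (⊤ : ℕ∞) W ∧ Z = gradV Ginv W)
    (hYs : ∀ Z ∈ Ys, ∃ W : Pt n → ℝ, ContDiff ℝ (⊤ : ℕ∞) W ∧ Z = gradV Ginv W)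
    (hVj : ContDiff ℝ (⊤ : ℕ∞) Vj) (hVk : ContDiff ℝ (⊤ : ℕ∞) Vk) :
    dirDer (symProdList (leviCivita G Ginv) Xs (gradV Ginv Vj)) (lieDerList Ys Vk)
      = dirDer (symProdList (leviCivita G Ginv) Ys (gradV Ginv Vk)) (lieDerList Xs Vj) := by
  have key : ∀ (L : List (VF n)) (V : Pt n → ℝ),
      (∀ Z ∈ L, ∃ W : Pt n → ℝ, ContDiff ℝ (⊤ : ℕ∞) W ∧ Z = gradV Ginv W) → ContDiff ℝ (⊤ : ℕ∞) V →
      ∃ F, ContDiff ℝ (⊤ : ℕ∞) F ∧ symProdList (leviCivita G Ginv) L (gradV Ginv V) = gradV Ginv F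
        ∧ lieDerList L V = F := by
    intro L
    induction L with
    | nil => exact fun V _ hV => ⟨V, hV, rfl, rfl⟩
    | cons Z L ih =>
      intro V hmem hV
      obtain ⟨F, hFs, hsym, hlie⟩ := ih V (fun W hW => hmem W (List.mem_cons_of_mem _ hW)) hV
      obtain ⟨W, hWs, hZW⟩ := hmem Z List.mem_cons_self
      refine ⟨beltrami Ginv W F, smooth_beltrami hGinv hWs hFs, ?_, ?_⟩
      · show symProd (leviCivita G Ginv) Z
            (symProdList (leviCivita G Ginv) L (gradV Ginv V)) = _
        rw [hsym, hZW]
        exact symProd_grad hG hGinv hpair hWs hFs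
      · show dirDer Z (lieDerList L V) = _
        rw [hlie, hZW]
        exact dirDer_grad hpair F
  obtain ⟨FX, hFXs, hX1, hX2⟩ := key Xs Vj hXs hVj
  obtain ⟨FY, hFYs, hY1, hY2⟩ := key Ys Vk hYs hVk
  rw [hX1, hX2, hY1, hY2, dirDer_grad hpair FY, dirDer_grad hpair FX,
    beltrami_symm hpair FX FY]
end
end
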